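/- arXiv:1012.4079 — 5 statements merged into one kernel-verified Lean document; each statement's English description precedes it below -/
import Mathlib

section
/- Let G be a finite group (possibly nonabelian) and H a finite abelian group. A function f: G → H is perfect nonlinear (i.e., for every α ≠ e in G, the derivative x ↦ f(αx)f(x)⁻¹ is balanced) if and only if for every irreducible unitary representation ρ: G → U(V) of G and every β ∈ H with β ≠ e, the endomorphism T = Σ_{x∈G} χ_β(f(x)) ρ(x) satisfies T ∘ T* = |G| · Id_V. -/
/-- `f` is balanced: every fiber has cardinality `|X| / |H|`. -/
def IsBalanced {X H : Type} [Fintype X] [Fintype H] (f : X → H) : Prop :=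
  ∀ y : H, Nat.card {x : X // f x = y} * Fintype.card H = Fintype.card X

/-- `f : G → H` is perfect nonlinear: every nontrivial left derivative is balanced. -/
def IsPerfectNonlinear {G H : Type} [Group G] [Fintype G] [Group H] [Fintype H]
    (f : G → H) : Prop :=
  ∀ α : G, α ≠ 1 → IsBalanced (fun x : G => f (α * x) * (f x)⁻¹)

/-!
Write `T = ∑ₓ χ_β(f x) ρ(x)`. Unitarity gives `ρ(x)* = ρ(x⁻¹)`, so `T T* = ∑_α c(α) ρ(α)`, where
`c(α) = ∑_y χ_β(f(αy) f(y)⁻¹)` is the autocorrelation of `χ_β ∘ f` and `c(1) = |G|`. By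
orthogonality of the characters of `H`, the derivative of `f` in direction `α` is balanced iff
`c(α) = 0` for every `β ≠ 1`. Hence perfect nonlinearity makes `T T* = |G| Id` an identity in the
group algebra. Conversely, an element of the group algebra acting by zero on every irreducible
unitary representation acts by zero on the regular representation, which is an orthogonal sum of
irreducible ones; applying it to `δ₁` shows it is zero.
-/

open Finset ComplexConjugate

section Characters

variable {H : Type*} [CommGroup H] [Finite H]

lemma MonoidHom.norm_apply_eq_one (ψ : H →* ℂ) (h : H) : ‖ψ h‖ = 1 :=
  Complex.norm_eq_one_of_pow_eq_one (by rw [← map_pow, pow_orderOf_eq_one, map_one])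
    (orderOf_pos h).ne'

lemma MonoidHom.conj_apply (ψ : H →* ℂ) (h : H) : conj (ψ h) = ψ h⁻¹ := by
  rw [map_inv, Complex.inv_eq_conj (ψ.norm_apply_eq_one h)]

lemma MonoidHom.exists_apply_ne_one {k : H} (hk : k ≠ 1) : ∃ ψ : H →* ℂ, ψ k ≠ 1 := by
  obtain ⟨φ, hφ⟩ := CommGroup.exists_apply_ne_one_of_hasEnoughRootsOfUnity H ℂ hk
  exact ⟨(Units.coeHom ℂ).comp φ, by simpa [Units.val_eq_one] using hφ⟩

end Characters

section Balanced

variable {H : Type} [CommGroup H] [Fintype H] (χ : H ≃* (H →* ℂ))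

lemma sum_char_apply_eq_ite [DecidableEq H] (k : H) :
    ∑ β, χ β k = if k = 1 then (Fintype.card H : ℂ) else 0 := by
  split_ifs with hk
  · simp [hk]
  obtain ⟨ψ, hψ⟩ := MonoidHom.exists_apply_ne_one hk
  refine sum_hom_units_eq_zero ((MonoidHom.eval k).comp χ.toMonoidHom) fun h ↦ hψ ?_
  simpa using DFunLike.congr_fun h (χ.symm ψ)

variable {X : Type} [Fintype X]

lemma sum_apply_eq_sum_card_fiber_mul [DecidableEq H] (D : X → H) (ψ : H →* ℂ) :
    ∑ x, ψ (D x) = ∑ h, (#{x | D x = h} : ℂ) * ψ h := by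
  rw [← sum_fiberwise univ D]
  refine sum_congr rfl fun h _ ↦ ?_
  rw [sum_congr rfl fun x hx ↦ by rw [(mem_filter.mp hx).2], sum_const, nsmul_eq_mul]

lemma card_mul_card_fiber [DecidableEq H] (D : X → H) (h : H) :
    (Fintype.card H * #{x | D x = h} : ℂ) = ∑ β, χ β h⁻¹ * ∑ x, χ β (D x) := by
  simp_rw [mul_sum, ← map_mul]
  rw [sum_comm]
  simp_rw [sum_char_apply_eq_ite, inv_mul_eq_one, ← sum_filter, sum_const, nsmul_eq_mul, mul_comm,
    eq_comm (a := h)]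

theorem isBalanced_iff_sum_char_eq_zero (D : X → H) :
    IsBalanced D ↔ ∀ β ≠ 1, ∑ x, χ β (D x) = 0 := by
  classical
  have hfiber : IsBalanced D ↔ ∀ h, (#{x | D x = h} * Fintype.card H : ℂ) = Fintype.card X := by
    simp only [IsBalanced, Nat.card_eq_fintype_card, Fintype.card_subtype]
    exact forall_congr' fun h ↦ by norm_cast
  rw [hfiber]
  constructor
  · intro hD β hβ
    have hχβ : χ β ≠ 1 := by simpa using hβ
    apply mul_right_cancel₀ (Nat.cast_ne_zero.mpr Fintype.card_ne_zero : (Fintype.card H : ℂ) ≠ 0)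
    rw [sum_apply_eq_sum_card_fiber_mul, sum_mul]
    simp_rw [mul_right_comm _ (χ β _), hD, ← mul_sum, sum_hom_units_eq_zero _ hχβ, mul_zero,
      zero_mul]
  · intro hD h
    rw [mul_comm, card_mul_card_fiber χ,
      Fintype.sum_eq_single 1 fun β hβ ↦ by rw [hD β hβ, mul_zero]]
    simp

end Balanced

section Autocorrelation

variable {G : Type*} [Group G] [Fintype G]

def autocorrelation (a : G → ℂ) (α : G) : ℂ := ∑ y, a (α * y) * conj (a y)

variable {H : Type*} [CommGroup H] [Finite H] (ψ : H →* ℂ) (f : G → H)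

lemma autocorrelation_char_comp (α : G) :
    autocorrelation (fun x ↦ ψ (f x)) α = ∑ y, ψ (f (α * y) * (f y)⁻¹) := by
  simp only [autocorrelation, MonoidHom.conj_apply, map_mul]

lemma autocorrelation_char_comp_one :
    autocorrelation (fun x ↦ ψ (f x)) 1 = Fintype.card G := by
  simp [autocorrelation_char_comp]

end Autocorrelation

theorem isPerfectNonlinear_iff_autocorrelation {G H : Type} [Group G] [Fintype G] [CommGroup H]
    [Fintype H] (χ : H ≃* (H →* ℂ)) (f : G → H) :
    IsPerfectNonlinear f ↔ ∀ β ≠ 1, ∀ α ≠ 1, autocorrelation (fun x ↦ χ β (f x)) α = 0 := by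
  simp only [IsPerfectNonlinear, isBalanced_iff_sum_char_eq_zero χ, autocorrelation_char_comp]
  exact forall₂_comm

section Unitary

variable {G V : Type*} [Group G] [NormedAddCommGroup V] [InnerProductSpace ℂ V]
  [FiniteDimensional ℂ V] {ρ : Representation ℂ G V}

lemma Representation.adjoint_apply_eq_inv
    (hρ : ∀ (g : G) (u v : V), (inner ℂ (ρ g u) (ρ g v) : ℂ) = inner ℂ u v) (g : G) :
    LinearMap.adjoint (ρ g) = ρ g⁻¹ := by
  refine ((LinearMap.eq_adjoint_iff _ _).mpr fun u v ↦ ?_).symm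
  rw [← hρ g, ← Module.End.mul_apply, ← map_mul, mul_inv_cancel, map_one, Module.End.one_apply]

lemma sum_smul_comp_adjoint_sum_smul [Fintype G]
    (hρ : ∀ (g : G) (u v : V), (inner ℂ (ρ g u) (ρ g v) : ℂ) = inner ℂ u v) (a : G → ℂ) :
    (∑ x, a x • ρ x) ∘ₗ LinearMap.adjoint (∑ x, a x • ρ x) = ∑ α, autocorrelation a α • ρ α := by
  simp_rw [map_sum, LinearEquiv.map_smulₛₗ, ρ.adjoint_apply_eq_inv hρ, ← Module.End.mul_eq_comp,
    sum_mul_sum, smul_mul_smul_comm, ← map_mul, autocorrelation, sum_smul]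
  rw [sum_comm, sum_comm (γ := G) (s := univ) (t := univ) (f := fun α y ↦ _ • ρ α)]
  refine sum_congr rfl fun y _ ↦ ?_
  exact Fintype.sum_equiv (Equiv.mulRight y⁻¹) _ _ fun x ↦ by simp

end Unitary

namespace Subrepresentation

section Field

variable {k G V : Type*} [Field k] [Monoid G] [AddCommGroup V] [Module k V]
  {ρ : Representation k G V}

lemma irreducible_toRepresentation_of_isAtom {σ : Subrepresentation ρ} (hσ : IsAtom σ) :
    Nontrivial σ.toSubmodule ∧
      ∀ U : Submodule k σ.toSubmodule,
        (∀ (g : G) (v : σ.toSubmodule), v ∈ U → σ.toRepresentation g v ∈ U) → U = ⊥ ∨ U = ⊤ := by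
  refine ⟨Submodule.nontrivial_iff_ne_bot.mpr fun h ↦ hσ.1 (toSubmodule_injective h), fun U hU ↦ ?_⟩
  let τ : Subrepresentation ρ :=
    ⟨U.map σ.toSubmodule.subtype, by
      rintro g _ ⟨v, hv, rfl⟩
      exact ⟨_, hU g v hv, rfl⟩⟩
  have hτσ : τ ≤ σ := by
    rintro _ ⟨v, -, rfl⟩
    exact v.2
  have hinj := Submodule.map_injective_of_injective σ.toSubmodule.injective_subtype
  refine (hσ.le_iff.mp hτσ).imp (fun h ↦ hinj ?_) (fun h ↦ hinj ?_)
  · rw [Submodule.map_bot]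
    exact congrArg toSubmodule h
  · rw [Submodule.map_subtype_top]
    exact congrArg toSubmodule h

end Field

variable {G V : Type*} [Group G] [NormedAddCommGroup V] [InnerProductSpace ℂ V]
  [FiniteDimensional ℂ V] {ρ : Representation ℂ G V}

noncomputable def orthogonal
    (hρ : ∀ (g : G) (u v : V), (inner ℂ (ρ g u) (ρ g v) : ℂ) = inner ℂ u v)
    (σ : Subrepresentation ρ) : Subrepresentation ρ where
  toSubmodule := σ.toSubmoduleᗮ
  apply_mem_toSubmodule g v hv u hu := by
    rw [← LinearMap.adjoint_inner_left, ρ.adjoint_apply_eq_inv hρ]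
    exact hv _ (σ.apply_mem_toSubmodule _ hu)

theorem le_ker_of_forall_isAtom
    (hρ : ∀ (g : G) (u v : V), (inner ℂ (ρ g u) (ρ g v) : ℂ) = inner ℂ u v)
    {W : Type*} [AddCommGroup W] [Module ℂ W] {A : V →ₗ[ℂ] W}
    (hA : ∀ σ : Subrepresentation ρ, IsAtom σ → σ.toSubmodule ≤ LinearMap.ker A)
    (σ : Subrepresentation ρ) : σ.toSubmodule ≤ LinearMap.ker A := by
  induction h : Module.finrank ℂ σ.toSubmodule using Nat.strong_induction_on generalizing σ with
  | _ n ih =>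
  rcases eq_or_ne σ ⊥ with rfl | hσ
  · exact bot_le
  by_cases hatom : IsAtom σ
  · exact hA σ hatom
  obtain ⟨τ, hτσ, hτ⟩ : ∃ τ < σ, τ ≠ ⊥ := by simpa [IsAtom, hσ] using hatom
  have hlt : ∀ τ' < σ, τ'.toSubmodule ≤ LinearMap.ker A := fun τ' h' ↦
    ih _ (h ▸ Submodule.finrank_lt_finrank_of_lt h') τ' rfl
  rw [← Submodule.sup_orthogonal_inf_of_hasOrthogonalProjection hτσ.le]
  refine sup_le (hlt τ hτσ) (hlt (orthogonal hρ τ ⊓ σ) (inf_le_right.lt_of_ne fun heq ↦ hτ ?_))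
  have hττ : τ.toSubmodule ≤ τ.toSubmoduleᗮ := hτσ.le.trans (heq ▸ inf_le_left)
  exact toSubmodule_injective ((Submodule.orthogonal_disjoint _).eq_bot_of_le hττ)

end Subrepresentation

section Regular

variable {G : Type} [Group G] [Fintype G]

noncomputable def regularRep : Representation ℂ G (EuclideanSpace ℂ G) where
  toFun g := (LinearIsometryEquiv.piLpCongrLeft 2 ℂ ℂ (Equiv.mulLeft g)).toLinearMap
  map_one' := by ext; simp [-Equiv.mulLeft_one]
  map_mul' g h := by ext; simp [-Equiv.mulLeft_mul, mul_assoc]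

lemma regularRep_inner (g : G) (u v : EuclideanSpace ℂ G) :
    inner ℂ (regularRep g u) (regularRep g v) = inner ℂ u v :=
  LinearIsometryEquiv.inner_map_map _ u v

lemma sum_smul_regularRep_single_one [DecidableEq G] (c : G → ℂ) :
    (∑ α, c α • regularRep α) (EuclideanSpace.single 1 1) = WithLp.toLp 2 c := by
  ext x
  simp [regularRep, Pi.single_apply]

theorem eq_zero_of_forall_irreducible_sum_smul_eq_zero (c : G → ℂ)
    (hc : ∀ (V : Type) [NormedAddCommGroup V] [InnerProductSpace ℂ V] [FiniteDimensional ℂ V]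
      (ρ : Representation ℂ G V),
      (Nontrivial V ∧
        ∀ U : Submodule ℂ V, (∀ (g : G) (v : V), v ∈ U → ρ g v ∈ U) → U = ⊥ ∨ U = ⊤) →
      (∀ (g : G) (u v : V), (inner ℂ (ρ g u) (ρ g v) : ℂ) = inner ℂ u v) →
      ∑ α, c α • ρ α = 0) :
    c = 0 := by
  classical
  have hreg : ∑ α, c α • regularRep α = 0 := by
    refine LinearMap.ker_eq_top.mp (top_le_iff.mp ?_)
    refine Subrepresentation.le_ker_of_forall_isAtom regularRep_inner (fun σ hσ v hv ↦ ?_) ⊤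
    have hσc := hc _ σ.toRepresentation
      (Subrepresentation.irreducible_toRepresentation_of_isAtom hσ)
      (fun g u v ↦ regularRep_inner g u v)
    simpa [Subrepresentation.toRepresentation] using
      congrArg (fun T ↦ (T ⟨v, hv⟩ : EuclideanSpace ℂ G)) hσc
  simpa [hreg] using congrArg WithLp.ofLp (sum_smul_regularRep_single_one c).symm

theorem forall_irreducible_sum_smul_eq_smul_id_iff (c : G → ℂ) :
    (∀ (V : Type) [NormedAddCommGroup V] [InnerProductSpace ℂ V] [FiniteDimensional ℂ V]
      (ρ : Representation ℂ G V),
      (Nontrivial V ∧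
        ∀ U : Submodule ℂ V, (∀ (g : G) (v : V), v ∈ U → ρ g v ∈ U) → U = ⊥ ∨ U = ⊤) →
      (∀ (g : G) (u v : V), (inner ℂ (ρ g u) (ρ g v) : ℂ) = inner ℂ u v) →
      ∑ α, c α • ρ α = c 1 • LinearMap.id) ↔ ∀ α ≠ 1, c α = 0 := by
  classical
  constructor
  · intro hc α hα
    have hd := eq_zero_of_forall_irreducible_sum_smul_eq_zero (c - Pi.single 1 (c 1))
      fun V _ _ _ ρ hirr hρ ↦ by
        simp [sub_smul, Pi.single_apply, hc V ρ hirr hρ, Module.End.one_eq_id]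
    simpa [hα] using congrFun hd α
  · intro hc V _ _ _ ρ _ _
    rw [Fintype.sum_eq_single 1 fun α hα ↦ by rw [hc α hα, zero_smul], map_one,
      Module.End.one_eq_id]

end Regular

theorem stmt12 {G H : Type} [Group G] [Fintype G] [CommGroup H] [Fintype H]
    (χ : H ≃* (H →* ℂ)) (f : G → H) :
    IsPerfectNonlinear f ↔
      ∀ (V : Type) [NormedAddCommGroup V] [InnerProductSpace ℂ V] [FiniteDimensional ℂ V]
        (ρ : Representation ℂ G V),
        (Nontrivial V ∧
          ∀ U : Submodule ℂ V, (∀ (g : G) (v : V), v ∈ U → ρ g v ∈ U) → U = ⊥ ∨ U = ⊤) →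
        (∀ (g : G) (u v : V), (inner ℂ (ρ g u) (ρ g v) : ℂ) = inner ℂ u v) →
        ∀ β : H, β ≠ 1 →
          (∑ x : G, χ β (f x) • ρ x) ∘ₗ LinearMap.adjoint (∑ x : G, χ β (f x) • ρ x)
            = (Fintype.card G : ℂ) • (LinearMap.id : V →ₗ[ℂ] V) := by
  rw [isPerfectNonlinear_iff_autocorrelation χ]
  constructor
  · intro hf V _ _ _ ρ hirr hρ β hβ
    have hT := (forall_irreducible_sum_smul_eq_smul_id_iff _).mpr (hf β hβ) V ρ hirr hρ
    rwa [autocorrelation_char_comp_one, ← sum_smul_comp_adjoint_sum_smul hρ] at hT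
  · intro hT β hβ
    refine (forall_irreducible_sum_smul_eq_smul_id_iff _).mp fun V _ _ _ ρ hirr hρ ↦ ?_
    rw [autocorrelation_char_comp_one, ← sum_smul_comp_adjoint_sum_smul hρ]
    exact hT V ρ hirr hρ β hβ
end

section
/- Let G be a finite abelian group, H a finite group, f: G → H, and ρ: H → U(W) an irreducible unitary representation of H. Define AC_{f,ρ}: G → End(W) by AC_{f,ρ}(α) = Σ_{x∈G} ρ(f(αx) f(x)⁻¹). Then for every α ∈ G, the vector-valued Fourier transform Σ_{x∈G} χ_α(x) AC_{f,ρ}(x) equals S(α) ∘ S(α)*, where S(α) = Σ_{x∈G} χ_α(x) ρ(f(x)). -/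
/-!
Unitarity gives `ρ(h)* = ρ(h⁻¹)`, and a character of a finite group takes values on the unit
circle, so `S(α)* = ∑ y, χ_α(y)⁻¹ ρ(f y)⁻¹`. Expanding `S(α) S(α)*` and substituting `x ↦ x y`,
the coefficient `χ_α(x y) χ_α(y)⁻¹` collapses to `χ_α(x)`, which leaves the Fourier transform
of the autocorrelation.
-/

open Finset

theorem sum_smul_sum_map_mul_inv {G H k A : Type*} [Group G] [Fintype G] [Group H] [Field k]
    [Ring A] [Algebra k A] (ψ : G →* k) (φ : H →* A) (f : G → H) :
    ∑ x, ψ x • ∑ y, φ (f (x * y) * (f y)⁻¹) =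
      (∑ x, ψ x • φ (f x)) * ∑ y, (ψ y)⁻¹ • φ (f y)⁻¹ := by
  simp_rw [sum_mul, mul_sum, smul_sum]
  refine sum_comm.trans (Eq.trans ?_ sum_comm)
  refine sum_congr rfl fun y _ => Fintype.sum_equiv (Equiv.mulRight y) _ _ fun x => ?_
  have hψy : ψ y ≠ 0 := ((Group.isUnit y).map ψ).ne_zero
  rw [Equiv.coe_mulRight, map_mul ψ, map_mul φ, smul_mul_smul_comm, mul_inv_cancel_right₀ hψy]

theorem MonoidHom.conj_apply_eq_inv {G 𝕜 : Type*} [Group G] [Finite G] [RCLike 𝕜]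
    (ψ : G →* 𝕜) (x : G) : starRingEnd 𝕜 (ψ x) = (ψ x)⁻¹ := by
  have hpow : ‖ψ x‖ ^ Nat.card G = 1 := by
    rw [← norm_pow, ← map_pow, pow_card_eq_one', map_one, norm_one]
  exact (RCLike.inv_eq_conj ((pow_eq_one_iff_of_nonneg (norm_nonneg _)
    Nat.card_pos.ne').1 hpow)).symm

section Unitary

variable {𝕜 H W : Type*} [RCLike 𝕜] [Group H] [NormedAddCommGroup W] [InnerProductSpace 𝕜 W]
  [FiniteDimensional 𝕜 W] (ρ : Representation 𝕜 H W)

theorem Representation.adjoint_eq_inv_of_inner_map_map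
    (hρ : ∀ (h : H) (u v : W), inner 𝕜 (ρ h u) (ρ h v) = inner 𝕜 u v) (h : H) :
    LinearMap.adjoint (ρ h) = ρ h⁻¹ := by
  refine ((LinearMap.eq_adjoint_iff _ _).2 fun u v => ?_).symm
  rw [← hρ h, ← Module.End.mul_apply, ← map_mul, mul_inv_cancel, map_one, Module.End.one_apply]

theorem Representation.adjoint_sum_smul_eq_of_inner_map_map
    (hρ : ∀ (h : H) (u v : W), inner 𝕜 (ρ h u) (ρ h v) = inner 𝕜 u v)
    {G : Type*} [Group G] [Fintype G] (ψ : G →* 𝕜) (f : G → H) :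
    LinearMap.adjoint (∑ x, ψ x • ρ (f x)) = ∑ x, (ψ x)⁻¹ • ρ (f x)⁻¹ := by
  simp only [map_sum, map_smulₛₗ, ψ.conj_apply_eq_inv, ρ.adjoint_eq_inv_of_inner_map_map hρ]

end Unitary

theorem stmt14_general {G H : Type} [CommGroup G] [Fintype G] [Group H]
    (χ : G ≃* (G →* ℂ)) (f : G → H)
    {W : Type} [NormedAddCommGroup W] [InnerProductSpace ℂ W] [FiniteDimensional ℂ W]
    (ρ : Representation ℂ H W)
    (hunitary : ∀ (h : H) (u v : W), (inner ℂ (ρ h u) (ρ h v) : ℂ) = inner ℂ u v)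
    (α : G) :
    (∑ x : G, χ α x • ∑ y : G, ρ (f (x * y) * (f y)⁻¹)) =
      (∑ x : G, χ α x • ρ (f x)) ∘ₗ
        LinearMap.adjoint (∑ x : G, χ α x • ρ (f x)) := by
  rw [ρ.adjoint_sum_smul_eq_of_inner_map_map hunitary, ← Module.End.mul_eq_comp]
  exact sum_smul_sum_map_mul_inv (χ α) ρ f

theorem stmt14 {G H : Type} [CommGroup G] [Fintype G] [Group H] [Fintype H]
    (χ : G ≃* (G →* ℂ)) (f : G → H)
    {W : Type} [NormedAddCommGroup W] [InnerProductSpace ℂ W] [FiniteDimensional ℂ W]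
    (ρ : Representation ℂ H W)
    (hirr : Nontrivial W ∧
      ∀ U : Submodule ℂ W, (∀ (h : H) (w : W), w ∈ U → ρ h w ∈ U) → U = ⊥ ∨ U = ⊤)
    (hunitary : ∀ (h : H) (u v : W), (inner ℂ (ρ h u) (ρ h v) : ℂ) = inner ℂ u v)
    (α : G) :
    (∑ x : G, χ α x • ∑ y : G, ρ (f (x * y) * (f y)⁻¹)) =
      (∑ x : G, χ α x • ρ (f x)) ∘ₗ
        LinearMap.adjoint (∑ x : G, χ α x • ρ (f x)) :=
  stmt14_general χ f ρ hunitary α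
end

section
/- Let G be a finite abelian group and H a finite group (possibly nonabelian). A function f: G → H is perfect nonlinear if and only if for every α ∈ G and every nontrivial irreducible unitary representation ρ: H → U(W) of H, the endomorphism S(α) = Σ_{x∈G} χ_α(x) ρ(f(x)) satisfies S(α) ∘ S(α)* = |G| · Id_W. -/
/-!
Write `D_β f (y) = f (β y) f (y)⁻¹` and `T_β = ∑_y ρ (D_β f (y))`, so that `T_1 = |G| • Id`.
Since `ρ(h)* = ρ(h⁻¹)`, `S(α) S(α)* = ∑_β χ_α(β) T_β`. If `D_β f` is balanced, `T_β` is a multiple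
of `∑_h ρ(h)`, which vanishes for nontrivial irreducible `ρ`; so perfect nonlinearity leaves only
`T_1`. Conversely, Fourier inversion over `G` turns the identities `S(α) S(α)* = T_1` into `T_γ = 0`
for `γ ≠ 1` and every nontrivial irreducible unitary `ρ`. By complete reducibility `T_γ` then kills
the orthogonal complement of the invariant vectors of any unitary representation; in the left
regular representation on `ℓ²(H)`, applied to `|H| δ₁ - 𝟙`, this says that every fibre of `D_γ f`
has `|G| / |H|` elements.
-/

open scoped ComplexConjugate

theorem MonoidHom.conj_apply_eq_apply_inv {Γ : Type*} [Group Γ] [Finite Γ] (φ : Γ →* ℂ)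
    (x : Γ) : conj (φ x) = φ x⁻¹ := by
  have hnorm : ‖φ x‖ = 1 :=
    Complex.norm_eq_one_of_pow_eq_one (by rw [← map_pow, pow_card_eq_one', map_one])
      Nat.card_pos.ne'
  rw [← Complex.inv_eq_conj hnorm]
  simp

section Characters

variable {G : Type*} [CommGroup G] [Fintype G] (χ : G ≃* (G →* ℂ))

theorem sum_char_apply_eq_zero {δ : G} (hδ : δ ≠ 1) : ∑ α, χ α δ = 0 := by
  obtain ⟨φ, hφ⟩ := CommGroup.exists_apply_ne_one_of_hasEnoughRootsOfUnity G ℂ hδ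
  refine sum_hom_units_eq_zero ((MonoidHom.eval δ).comp χ.toMonoidHom) fun h => hφ ?_
  ext
  simpa using DFunLike.congr_fun h (χ.symm ((Units.coeHom ℂ).comp φ))

theorem sum_char_inv_smul_sum_char_smul {V : Type*} [AddCommGroup V] [Module ℂ V] (T : G → V)
    (γ : G) : ∑ α, χ α γ⁻¹ • ∑ β, χ α β • T β = (Fintype.card G : ℂ) • T γ := by
  simp_rw [Finset.smul_sum, smul_smul, ← map_mul]
  rw [Finset.sum_comm]
  simp_rw [← Finset.sum_smul]
  rw [Fintype.sum_eq_single γ fun β hβ => by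
    rw [sum_char_apply_eq_zero χ (by rwa [Ne, inv_mul_eq_one, eq_comm]), zero_smul]]
  simp

theorem apply_eq_zero_of_forall_sum_char_smul_eq_apply_one {V : Type*} [AddCommGroup V]
    [Module ℂ V] {T : G → V} (hT : ∀ α, ∑ β, χ α β • T β = T 1) {γ : G} (hγ : γ ≠ 1) :
    T γ = 0 := by
  have h := sum_char_inv_smul_sum_char_smul χ T γ
  simp_rw [hT, ← Finset.sum_smul, sum_char_apply_eq_zero χ (inv_ne_one.2 hγ), zero_smul] at h
  exact (smul_eq_zero.1 h.symm).resolve_left (by simp)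

end Characters

namespace Representation

section Irreducible

variable {k H V : Type*} [Field k] [Group H] [Fintype H] [AddCommGroup V] [Module k V]
  {ρ : Representation k H V}

theorem norm_eq_zero_of_irreducible
    (hirr : ∀ U : Submodule k V, (∀ h, U ≤ U.comap (ρ h)) → U = ⊥ ∨ U = ⊤) (hne : ρ ≠ 1) :
    ρ.norm = 0 := by
  have hinv : ∀ h, LinearMap.range ρ.norm ≤ (LinearMap.range ρ.norm).comap (ρ h) := by
    rintro h _ ⟨v, rfl⟩
    exact ⟨v, (self_norm_apply ρ h v).symm⟩
  refine LinearMap.range_eq_bot.1 <| (hirr _ hinv).resolve_right fun htop => hne ?_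
  ext h w
  obtain ⟨v, rfl⟩ := LinearMap.range_eq_top.1 htop w
  simp

end Irreducible

section Unitary

variable {𝕜 H W : Type*} [RCLike 𝕜] [Group H] [NormedAddCommGroup W] [InnerProductSpace 𝕜 W]
  {ρ : Representation 𝕜 H W}

variable (ρ) in
def IsUnitary : Prop :=
  ∀ h u v, inner 𝕜 (ρ h u) (ρ h v) = inner 𝕜 u v

theorem IsUnitary.inner_inv_apply_left (hρ : ρ.IsUnitary) (h : H) (u v : W) :
    inner 𝕜 (ρ h⁻¹ u) v = inner 𝕜 u (ρ h v) := by
  rw [← hρ h, self_inv_apply]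

theorem IsUnitary.adjoint_eq [FiniteDimensional 𝕜 W] (hρ : ρ.IsUnitary) (h : H) :
    LinearMap.adjoint (ρ h) = ρ h⁻¹ :=
  (LinearMap.eq_adjoint_iff _ _).2 (hρ.inner_inv_apply_left h) |>.symm

theorem IsUnitary.orthogonal_le_comap (hρ : ρ.IsUnitary) {U : Submodule 𝕜 W}
    (hU : ∀ h, U ≤ U.comap (ρ h)) (h : H) : Uᗮ ≤ Uᗮ.comap (ρ h) := fun w hw u hu => by
  rw [← hρ.inner_inv_apply_left]
  exact hw _ (hU h⁻¹ hu)

theorem IsUnitary.subrepresentation (hρ : ρ.IsUnitary) (U : Submodule 𝕜 W)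
    (hU : ∀ h, U ≤ U.comap (ρ h)) : (ρ.subrepresentation U hU).IsUnitary :=
  fun h u v => hρ h u v

theorem invariants_subrepresentation_eq_bot {U : Submodule 𝕜 W} (hU : ∀ h, U ≤ U.comap (ρ h))
    (hdisj : Disjoint U ρ.invariants) : (ρ.subrepresentation U hU).invariants = ⊥ := by
  refine eq_bot_iff.2 fun u hu => ?_
  have hmem : (u : W) ∈ ρ.invariants := fun h => congr_arg Subtype.val (hu h)
  simpa using hdisj.le_bot ⟨u.2, hmem⟩

theorem sum_apply_eq_zero_of_subrepresentation {X : Type*} [Fintype X] {D : X → H}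
    {U : Submodule 𝕜 W} (hU : ∀ h, U ≤ U.comap (ρ h))
    (hD : ∑ x, ρ.subrepresentation U hU (D x) = 0) {u : W} (hu : u ∈ U) :
    (∑ x, ρ (D x)) u = 0 := by
  simpa [LinearMap.sum_apply, Submodule.coe_sum] using
    congr_arg Subtype.val (LinearMap.congr_fun hD ⟨u, hu⟩)

end Unitary

section CompleteReducibility

variable {𝕜 H : Type*} [RCLike 𝕜] [Group H] {X : Type*} [Fintype X] {D : X → H}

theorem IsUnitary.sum_eq_zero_of_invariants_eq_bot
    (hD : ∀ (W : Type) [NormedAddCommGroup W] [InnerProductSpace 𝕜 W] [FiniteDimensional 𝕜 W]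
      (σ : Representation 𝕜 H W),
      (∀ U : Submodule 𝕜 W, (∀ h, U ≤ U.comap (σ h)) → U = ⊥ ∨ U = ⊤) →
      σ.IsUnitary → σ ≠ 1 → ∑ x, σ (D x) = 0)
    {W : Type} [NormedAddCommGroup W] [InnerProductSpace 𝕜 W] [FiniteDimensional 𝕜 W]
    {ρ : Representation 𝕜 H W} (hρ : ρ.IsUnitary) (hinv : ρ.invariants = ⊥) :
    ∑ x, ρ (D x) = 0 := by
  induction hn : Module.finrank 𝕜 W using Nat.strong_induction_on generalizing W with
  | _ n ih =>
  by_cases hred : ∃ U : Submodule 𝕜 W, (∀ h, U ≤ U.comap (ρ h)) ∧ U ≠ ⊥ ∧ U ≠ ⊤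
  · obtain ⟨U, hU, hUbot, hUtop⟩ := hred
    have hvanish (p : Submodule 𝕜 W) (hp : ∀ h, p ≤ p.comap (ρ h)) (hpt : p ≠ ⊤) :
        ∀ v ∈ p, (∑ x, ρ (D x)) v = 0 :=
      fun v hv => sum_apply_eq_zero_of_subrepresentation hp
        (ih _ (hn ▸ Submodule.finrank_lt hpt) (hρ.subrepresentation p hp)
          (invariants_subrepresentation_eq_bot hp (hinv ▸ disjoint_bot_right)) rfl) hv
    ext w
    obtain ⟨u, hu, v, hv, rfl⟩ := U.exists_add_mem_mem_orthogonal w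
    rw [map_add, hvanish U hU hUtop u hu,
      hvanish Uᗮ (hρ.orthogonal_le_comap hU) (mt (Submodule.orthogonal_eq_top_iff U).1 hUbot) v hv,
      add_zero, LinearMap.zero_apply]
  · push Not at hred
    rcases subsingleton_or_nontrivial W with hW | hW
    · exact Subsingleton.elim _ _
    refine hD W ρ (fun U hU => or_iff_not_imp_left.2 (hred U hU)) hρ fun h1 => ?_
    have htop : ρ.invariants = ⊤ := by
      ext
      simp [mem_invariants, h1]
    exact bot_ne_top (hinv ▸ htop)

theorem IsUnitary.sum_apply_eq_zero_of_mem_orthogonal_invariants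
    (hD : ∀ (W : Type) [NormedAddCommGroup W] [InnerProductSpace 𝕜 W] [FiniteDimensional 𝕜 W]
      (σ : Representation 𝕜 H W),
      (∀ U : Submodule 𝕜 W, (∀ h, U ≤ U.comap (σ h)) → U = ⊥ ∨ U = ⊤) →
      σ.IsUnitary → σ ≠ 1 → ∑ x, σ (D x) = 0)
    {W : Type} [NormedAddCommGroup W] [InnerProductSpace 𝕜 W] [FiniteDimensional 𝕜 W]
    {ρ : Representation 𝕜 H W} (hρ : ρ.IsUnitary) {v : W} (hv : v ∈ ρ.invariantsᗮ) :
    (∑ x, ρ (D x)) v = 0 := by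
  have hinv (h : H) : ρ.invariants ≤ ρ.invariants.comap (ρ h) := fun w hw => by
    rw [Submodule.mem_comap, (mem_invariants ρ w).1 hw h]
    exact hw
  have hperp := hρ.orthogonal_le_comap hinv
  exact sum_apply_eq_zero_of_subrepresentation hperp
    ((hρ.subrepresentation _ hperp).sum_eq_zero_of_invariants_eq_bot hD
      (invariants_subrepresentation_eq_bot hperp (Submodule.orthogonal_disjoint _).symm)) hv

end CompleteReducibility

section LeftRegular

variable {𝕜 H : Type*} [RCLike 𝕜] [Group H]

variable (𝕜 H) in
noncomputable def leftRegularL2 [Fintype H] : Representation 𝕜 H (EuclideanSpace 𝕜 H) where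
  toFun h := (LinearIsometryEquiv.piLpCongrLeft 2 𝕜 𝕜 (Equiv.mulLeft h)).toLinearMap
  map_one' := by ext; simp [-Equiv.mulLeft_one]
  map_mul' _ _ := by ext; simp [-Equiv.mulLeft_mul, mul_assoc]

variable [Fintype H]

@[simp]
theorem leftRegularL2_apply_apply (h : H) (ψ : EuclideanSpace 𝕜 H) (g : H) :
    leftRegularL2 𝕜 H h ψ g = ψ (h⁻¹ * g) := by
  simp [leftRegularL2]

theorem isUnitary_leftRegularL2 : (leftRegularL2 𝕜 H).IsUnitary :=
  fun h => (LinearIsometryEquiv.piLpCongrLeft 2 𝕜 𝕜 (Equiv.mulLeft h)).inner_map_map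

theorem apply_eq_apply_one_of_mem_invariants_leftRegularL2 {ψ : EuclideanSpace 𝕜 H}
    (hψ : ψ ∈ (leftRegularL2 𝕜 H).invariants) (g : H) : ψ g = ψ 1 := by
  simpa using (congr_arg (· g) (hψ g)).symm

end LeftRegular

end Representation

section Balanced

variable {X H : Type} [Fintype X] [Fintype H] {D : X → H}

theorem IsBalanced.card_smul_sum_comp (hD : IsBalanced D) {M : Type*} [AddCommMonoid M]
    (g : H → M) : Fintype.card H • ∑ x, g (D x) = Fintype.card X • ∑ h, g h := by
  classical
  rw [← Finset.sum_fiberwise Finset.univ D, Finset.smul_sum, Finset.smul_sum]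
  refine Finset.sum_congr rfl fun h _ => ?_
  rw [Finset.sum_congr rfl fun x hx => by rw [(Finset.mem_filter.1 hx).2], Finset.sum_const,
    smul_smul, ← hD h, Nat.card_eq_fintype_card, Fintype.card_subtype, mul_comm]

theorem IsBalanced.sum_eq_zero_of_irreducible [Group H] (hD : IsBalanced D) {k V : Type*}
    [Field k] [CharZero k] [AddCommGroup V] [Module k V] {ρ : Representation k H V}
    (hirr : ∀ U : Submodule k V, (∀ h, U ≤ U.comap (ρ h)) → U = ⊥ ∨ U = ⊤) (hne : ρ ≠ 1) :
    ∑ x, ρ (D x) = 0 := by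
  have h := hD.card_smul_sum_comp fun h => ρ h
  change _ = _ • ρ.norm at h
  rw [ρ.norm_eq_zero_of_irreducible hirr hne, smul_zero, ← Nat.cast_smul_eq_nsmul k] at h
  exact (smul_eq_zero.1 h).resolve_left (by simp)

open Representation in
theorem isBalanced_of_forall_sum_eq_zero {𝕜 : Type} [RCLike 𝕜] [Group H]
    (hD : ∀ (W : Type) [NormedAddCommGroup W] [InnerProductSpace 𝕜 W] [FiniteDimensional 𝕜 W]
      (σ : Representation 𝕜 H W),
      (∀ U : Submodule 𝕜 W, (∀ h, U ≤ U.comap (σ h)) → U = ⊥ ∨ U = ⊤) →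
      σ.IsUnitary → σ ≠ 1 → ∑ x, σ (D x) = 0) :
    IsBalanced D := by
  classical
  intro g
  set v : EuclideanSpace 𝕜 H :=
    (Fintype.card H : 𝕜) • PiLp.single 2 1 1 - WithLp.toLp 2 1
  have hv : v ∈ (leftRegularL2 𝕜 H).invariantsᗮ := by
    refine (Submodule.mem_orthogonal' _ _).2 fun ψ hψ => ?_
    have hconst : ψ = ψ 1 • WithLp.toLp 2 1 := by
      ext k
      simp [apply_eq_apply_one_of_mem_invariants_leftRegularL2 hψ k]
    rw [hconst, inner_smul_right]
    simp [v, PiLp.inner_apply, apply_ite (starRingEnd 𝕜)]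
  have h0 := congr_arg (· g)
    (isUnitary_leftRegularL2.sum_apply_eq_zero_of_mem_orthogonal_invariants hD hv)
  simp [v, LinearMap.sum_apply, inv_mul_eq_one, Finset.sum_ite, sub_eq_zero] at h0
  rw [Nat.card_eq_fintype_card, Fintype.card_subtype]
  exact_mod_cast h0

end Balanced

section PerfectNonlinear

variable {G H : Type*}

def leftDeriv [Mul G] [Group H] (f : G → H) (α x : G) : H :=
  f (α * x) * (f x)⁻¹

@[simp]
theorem leftDeriv_one [MulOneClass G] [Group H] (f : G → H) : leftDeriv f 1 = 1 := by
  ext x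
  simp [leftDeriv]

variable [CommGroup G] [Fintype G] [Group H]

theorem sum_char_smul_comp_adjoint (χ : G ≃* (G →* ℂ)) (f : G → H) {W : Type*}
    [NormedAddCommGroup W] [InnerProductSpace ℂ W] [FiniteDimensional ℂ W]
    {ρ : Representation ℂ H W} (hρ : ρ.IsUnitary) (α : G) :
    (∑ x, χ α x • ρ (f x)) ∘ₗ LinearMap.adjoint (∑ x, χ α x • ρ (f x))
      = ∑ β, χ α β • ∑ y, ρ (leftDeriv f β y) := by
  have hadj : LinearMap.adjoint (∑ x, χ α x • ρ (f x)) = ∑ y, χ α y⁻¹ • ρ (f y)⁻¹ := by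
    rw [map_sum]
    refine Finset.sum_congr rfl fun y _ => ?_
    rw [map_smulₛₗ, hρ.adjoint_eq, MonoidHom.conj_apply_eq_apply_inv]
  simp_rw [hadj, ← Module.End.mul_eq_comp, Finset.sum_mul_sum, Finset.smul_sum]
  rw [Finset.sum_comm]
  conv_rhs => rw [Finset.sum_comm]
  refine Finset.sum_congr rfl fun y _ => (Fintype.sum_equiv (Equiv.mulRight y) _ _ fun β => ?_).symm
  rw [Equiv.coe_mulRight, smul_mul_smul_comm, ← map_mul (χ α), mul_inv_cancel_right, ← map_mul ρ]
  rfl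

theorem sum_leftDeriv_one {k V : Type*} [CommSemiring k] [AddCommMonoid V] [Module k V]
    (ρ : Representation k H V) (f : G → H) :
    ∑ x, ρ (leftDeriv f 1 x) = (Fintype.card G : k) • LinearMap.id := by
  simp only [leftDeriv_one, Pi.one_apply, map_one, Finset.sum_const, Finset.card_univ,
    ← Nat.cast_smul_eq_nsmul k, Module.End.one_eq_id]

end PerfectNonlinear

theorem stmt15 {G H : Type} [CommGroup G] [Fintype G] [Group H] [Fintype H]
    (χ : G ≃* (G →* ℂ)) (f : G → H) :
    IsPerfectNonlinear f ↔
      ∀ (α : G) (W : Type) [NormedAddCommGroup W] [InnerProductSpace ℂ W]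
        [FiniteDimensional ℂ W] (ρ : Representation ℂ H W),
        (Nontrivial W ∧
          ∀ U : Submodule ℂ W, (∀ (h : H) (w : W), w ∈ U → ρ h w ∈ U) → U = ⊥ ∨ U = ⊤) →
        (∀ (h : H) (u v : W), (inner ℂ (ρ h u) (ρ h v) : ℂ) = inner ℂ u v) →
        ρ ≠ 1 →
          (∑ x : G, χ α x • ρ (f x)) ∘ₗ LinearMap.adjoint (∑ x : G, χ α x • ρ (f x))
            = (Fintype.card G : ℂ) • (LinearMap.id : W →ₗ[ℂ] W) := by
  constructor
  · intro hf α W _ _ _ ρ hirr hρ hne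
    rw [sum_char_smul_comp_adjoint χ f hρ, Fintype.sum_eq_single 1 fun β hβ => by
      rw [IsBalanced.sum_eq_zero_of_irreducible (D := leftDeriv f β) (hf β hβ) hirr.2 hne,
        smul_zero], map_one, one_smul, sum_leftDeriv_one]
  · intro hS γ hγ
    refine isBalanced_of_forall_sum_eq_zero (𝕜 := ℂ) fun W _ _ _ σ hirr hσ hne => ?_
    have hW : Nontrivial W := by
      by_contra h
      rw [not_nontrivial_iff_subsingleton] at h
      exact hne (MonoidHom.ext fun _ => Subsingleton.elim _ _)
    refine apply_eq_zero_of_forall_sum_char_smul_eq_apply_one χ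
      (T := fun β => ∑ y, σ (leftDeriv f β y)) (fun α => ?_) hγ
    rw [← sum_char_smul_comp_adjoint χ f hσ, hS α W σ ⟨hW, hirr⟩ hσ hne, sum_leftDeriv_one]
end

section
/- Let G and H be finite groups (both possibly nonabelian), f: G → H, ρ: G → U(V) an irreducible unitary representation of G, and ρ': H → U(W) an irreducible unitary representation of H with matrix coefficients ρ'_{ij} in a fixed orthonormal basis of W. Define AC_{f,ρ',i,j}(α) = Σ_{x∈G} ρ'_{ij}(f(αx)f(x)⁻¹). Then Σ_{α∈G} AC_{f,ρ',i,j}(α) ρ(α) = Σ_{k=1}^{dim W} T_{ik} ∘ (T_{jk})*, where T_{ik} = Σ_{x∈G} ρ'_{ik}(f(x)) ρ(x) ∈ End(V). -/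
/-!
Unitarity of `ρ` gives `ρ(y)* = ρ(y⁻¹)`, so `T_{ik} ∘ T_{jk}*` is the double sum of
`ρ'_{ik}(f x) · conj ρ'_{jk}(f y) · ρ(x y⁻¹)` over `x, y`. Summing over `k`, unitarity of `ρ'` and
Parseval's identity in the basis `b` combine the coefficients into `ρ'_{ij}(f x · (f y)⁻¹)`, and the
substitution `α = x y⁻¹` turns the double sum into the Fourier transform of the autocorrelation.
-/

open scoped InnerProductSpace

theorem Fintype.sum_sum_mul_right_smul {G 𝕜 M : Type*} [Group G] [Fintype G] [Semiring 𝕜]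
    [AddCommMonoid M] [Module 𝕜 M] (F : G → G → 𝕜) (φ : G → M) :
    ∑ α, (∑ x, F (α * x) x) • φ α = ∑ z, ∑ x, F z x • φ (z * x⁻¹) := by
  simp only [Finset.sum_smul]
  rw [Finset.sum_comm, Finset.sum_comm (γ := G) (f := fun z x => F z x • φ (z * x⁻¹))]
  refine Finset.sum_congr rfl fun x _ => ?_
  exact Fintype.sum_equiv (Equiv.mulRight x) _ _ fun α => by simp

namespace Representation

variable {𝕜 G E : Type*} [RCLike 𝕜] [Group G] [NormedAddCommGroup E] [InnerProductSpace 𝕜 E]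
  {ρ : Representation 𝕜 G E}

theorem inner_inv_apply_left (hρ : ∀ (g : G) (u v : E), ⟪ρ g u, ρ g v⟫_𝕜 = ⟪u, v⟫_𝕜)
    (g : G) (u v : E) : ⟪ρ g⁻¹ u, v⟫_𝕜 = ⟪u, ρ g v⟫_𝕜 := by
  rw [← hρ g, ← Module.End.mul_apply, ← map_mul, mul_inv_cancel, map_one, Module.End.one_apply]

theorem adjoint_eq_inv [FiniteDimensional 𝕜 E]
    (hρ : ∀ (g : G) (u v : E), ⟪ρ g u, ρ g v⟫_𝕜 = ⟪u, v⟫_𝕜) (g : G) :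
    LinearMap.adjoint (ρ g) = ρ g⁻¹ :=
  ((LinearMap.eq_adjoint_iff _ _).2 (inner_inv_apply_left hρ g)).symm

theorem sum_inner_mul_conj_inner (hρ : ∀ (g : G) (u v : E), ⟪ρ g u, ρ g v⟫_𝕜 = ⟪u, v⟫_𝕜)
    {ι : Type*} [Fintype ι] (b : OrthonormalBasis ι 𝕜 E) (g h : G) (u v : E) :
    ∑ k, ⟪u, ρ g (b k)⟫_𝕜 * starRingEnd 𝕜 ⟪v, ρ h (b k)⟫_𝕜 = ⟪u, ρ (g * h⁻¹) v⟫_𝕜 := by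
  have hconj (k : ι) : starRingEnd 𝕜 ⟪v, ρ h (b k)⟫_𝕜 = ⟪b k, ρ h⁻¹ v⟫_𝕜 := by
    rw [inner_conj_symm, ← inner_inv_apply_left hρ, inv_inv]
  simp only [hconj, ← inner_inv_apply_left hρ g]
  rw [b.sum_inner_mul_inner, inner_inv_apply_left hρ, map_mul, Module.End.mul_apply]

theorem sum_smul_comp_adjoint_sum_smul [Fintype G] [FiniteDimensional 𝕜 E]
    (hρ : ∀ (g : G) (u v : E), ⟪ρ g u, ρ g v⟫_𝕜 = ⟪u, v⟫_𝕜) (a c : G → 𝕜) :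
    (∑ x, a x • ρ x) ∘ₗ LinearMap.adjoint (∑ y, c y • ρ y)
      = ∑ x, ∑ y, (a x * starRingEnd 𝕜 (c y)) • ρ (x * y⁻¹) := by
  have hadj : LinearMap.adjoint (∑ y, c y • ρ y) = ∑ y, starRingEnd 𝕜 (c y) • ρ y⁻¹ := by
    simp only [map_sum, LinearEquiv.map_smulₛₗ, adjoint_eq_inv hρ]
  rw [hadj, ← Module.End.mul_eq_comp, Finset.sum_mul_sum]
  simp only [smul_mul_smul_comm, ← map_mul]

end Representation

theorem stmt17_general {G H : Type} [Group G] [Fintype G] [Group H]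
    {V : Type} [NormedAddCommGroup V] [InnerProductSpace ℂ V] [FiniteDimensional ℂ V]
    {W : Type} [NormedAddCommGroup W] [InnerProductSpace ℂ W]
    (ρ : Representation ℂ G V)
    (hρu : ∀ (g : G) (u v : V), (inner ℂ (ρ g u) (ρ g v) : ℂ) = inner ℂ u v)
    (ρ' : Representation ℂ H W)
    (hρ'u : ∀ (h : H) (u v : W), (inner ℂ (ρ' h u) (ρ' h v) : ℂ) = inner ℂ u v)
    {n : ℕ} (b : OrthonormalBasis (Fin n) ℂ W)
    (f : G → H) (i j : Fin n) :
    -- Fourier transform of the autocorrelation function AC_{f,ρ',i,j}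
    (∑ α : G, (∑ x : G, (inner ℂ (b i) (ρ' (f (α * x) * (f x)⁻¹) (b j)) : ℂ)) • ρ α)
      = ∑ k : Fin n,
          (∑ x : G, (inner ℂ (b i) (ρ' (f x) (b k)) : ℂ) • ρ x) ∘ₗ
            LinearMap.adjoint (∑ x : G, (inner ℂ (b j) (ρ' (f x) (b k)) : ℂ) • ρ x) := by
  rw [Fintype.sum_sum_mul_right_smul (fun z x => ⟪b i, ρ' (f z * (f x)⁻¹) (b j)⟫_ℂ)]
  simp only [Representation.sum_smul_comp_adjoint_sum_smul hρu]
  symm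
  rw [Finset.sum_comm]
  refine Finset.sum_congr rfl fun x _ => ?_
  rw [Finset.sum_comm]
  refine Finset.sum_congr rfl fun y _ => ?_
  rw [← Finset.sum_smul, Representation.sum_inner_mul_conj_inner hρ'u]

theorem stmt17 {G H : Type} [Group G] [Fintype G] [Group H] [Fintype H]
    {V : Type} [NormedAddCommGroup V] [InnerProductSpace ℂ V] [FiniteDimensional ℂ V]
    {W : Type} [NormedAddCommGroup W] [InnerProductSpace ℂ W] [FiniteDimensional ℂ W]
    (ρ : Representation ℂ G V)
    (hρirr : Nontrivial V ∧
      ∀ U : Submodule ℂ V, (∀ (g : G) (v : V), v ∈ U → ρ g v ∈ U) → U = ⊥ ∨ U = ⊤)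
    (hρu : ∀ (g : G) (u v : V), (inner ℂ (ρ g u) (ρ g v) : ℂ) = inner ℂ u v)
    (ρ' : Representation ℂ H W)
    (hρ'irr : Nontrivial W ∧
      ∀ U : Submodule ℂ W, (∀ (h : H) (w : W), w ∈ U → ρ' h w ∈ U) → U = ⊥ ∨ U = ⊤)
    (hρ'u : ∀ (h : H) (u v : W), (inner ℂ (ρ' h u) (ρ' h v) : ℂ) = inner ℂ u v)
    {n : ℕ} (b : OrthonormalBasis (Fin n) ℂ W)
    (f : G → H) (i j : Fin n) :
    -- Fourier transform of the autocorrelation function AC_{f,ρ',i,j}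
    (∑ α : G, (∑ x : G, (inner ℂ (b i) (ρ' (f (α * x) * (f x)⁻¹) (b j)) : ℂ)) • ρ α)
      = ∑ k : Fin n,
          (∑ x : G, (inner ℂ (b i) (ρ' (f x) (b k)) : ℂ) • ρ x) ∘ₗ
            LinearMap.adjoint (∑ x : G, (inner ℂ (b j) (ρ' (f x) (b k)) : ℂ) • ρ x) :=
  stmt17_general ρ hρu ρ' hρ'u b f i j
end

section
/- Let G and H be finite abelian groups. A function f: G → H is perfect nonlinear if and only if for every α ∈ G and every nontrivial β ∈ H, the Fourier transform of χ_β ∘ f at α has absolute value √|G|, i.e., |Σ_{x∈G} χ_β(f(x)) χ_α(x)|² = |G|. -/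
open Finset Complex
open scoped Classical

section Aux

variable {G : Type} [CommGroup G] [Fintype G]

lemma sum_char_eq_zero (χ : G →* ℂ) (hχ : χ ≠ 1) : ∑ x : G, χ x = 0 := by
  obtain ⟨a, ha⟩ : ∃ a, χ a ≠ 1 := by
    by_contra h; push_neg at h; exact hχ (MonoidHom.ext fun x => h x)
  have h1 : χ a * ∑ x : G, χ x = ∑ x : G, χ x := by
    rw [Finset.mul_sum]
    simp_rw [← map_mul]
    exact Fintype.sum_bijective (a * ·) (Group.mulLeft_bijective a) _ _ (fun x => rfl)
  have h2 : (χ a - 1) * ∑ x : G, χ x = 0 := by rw [sub_mul, one_mul, h1, sub_self]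
  rcases mul_eq_zero.mp h2 with h | h
  · exact absurd (by linear_combination h) ha
  · exact h

/-- Evaluation at `a` as a character of `G` (via the isomorphism `χG`). -/
def evalHom (χG : G ≃* (G →* ℂ)) (a : G) : G →* ℂ where
  toFun α := χG α a
  map_one' := by simp
  map_mul' x y := by show χG (x * y) a = _; rw [map_mul]; rfl

lemma sum_char (χ : G →* ℂ) : ∑ x : G, χ x = if χ = 1 then (Fintype.card G : ℂ) else 0 := by
  split_ifs with h
  · simp [h, Finset.card_univ]
  · exact sum_char_eq_zero χ h

lemma evalHom_ne_one (χG : G ≃* (G →* ℂ)) (a : G) (ha : a ≠ 1) : evalHom χG a ≠ 1 := by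
  intro hcon
  have key : ∑ a : G, ∑ α : G, χG α a = (Fintype.card G : ℂ) := by
    rw [Finset.sum_comm]
    have : ∀ α : G, ∑ a : G, χG α a = if α = 1 then (Fintype.card G : ℂ) else 0 := by
      intro α
      rw [sum_char (χG α)]
      congr 1
      exact propext (EmbeddingLike.map_eq_one_iff)
    simp_rw [this]
    simp
  have key2 : ∑ a : G, ∑ α : G, χG α a
      = ((univ.filter (fun a : G => evalHom χG a = 1)).card : ℂ) * (Fintype.card G : ℂ) := by
    have : ∀ a : G, ∑ α : G, χG α a = if evalHom χG a = 1 then (Fintype.card G : ℂ) else 0 :=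
      fun a => sum_char (evalHom χG a)
    simp_rw [this]
    rw [Finset.sum_ite, Finset.sum_const, Finset.sum_const_zero]
    simp [mul_comm]
  have hG : (Fintype.card G : ℂ) ≠ 0 := Nat.cast_ne_zero.mpr Fintype.card_ne_zero
  have hcard : (univ.filter (fun a : G => evalHom χG a = 1)).card = 1 := by
    have h3 : ((univ.filter (fun a : G => evalHom χG a = 1)).card : ℂ) * (Fintype.card G : ℂ)
        = 1 * (Fintype.card G : ℂ) := by rw [one_mul, ← key2, key]
    exact_mod_cast mul_right_cancel₀ hG h3
  have h1mem : (1 : G) ∈ univ.filter (fun a : G => evalHom χG a = 1) := by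
    simp only [Finset.mem_filter, Finset.mem_univ, true_and]
    exact MonoidHom.ext fun α => map_one (χG α)
  have hamem : a ∈ univ.filter (fun a : G => evalHom χG a = 1) := by
    simp only [Finset.mem_filter, Finset.mem_univ, true_and]
    exact hcon
  exact ha (Finset.card_le_one.mp hcard.le a hamem 1 h1mem)

lemma sum_eval_ite (χG : G ≃* (G →* ℂ)) (c : G) :
    ∑ α : G, χG α c = if c = 1 then (Fintype.card G : ℂ) else 0 := by
  have h : ∑ α : G, χG α c = ∑ α : G, evalHom χG c α := rfl
  rw [h, sum_char (evalHom χG c)]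
  split_ifs with h1 h2 h2
  · rfl
  · exact absurd h1 (evalHom_ne_one χG c h2)
  · exact absurd (by rw [h2]; exact MonoidHom.ext fun α => map_one (χG α)) h1
  · rfl

lemma char_abs (χ : G →* ℂ) (x : G) : ‖χ x‖ = 1 := by
  have hn : Fintype.card G ≠ 0 := Fintype.card_ne_zero
  have hp : (χ x) ^ (Fintype.card G) = 1 := by rw [← map_pow, pow_card_eq_one, map_one]
  have h2 : (‖χ x‖) ^ (Fintype.card G) = 1 := by
    rw [← norm_pow, hp, norm_one]
  rcases lt_trichotomy (‖χ x‖) 1 with h | h | h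
  · have := pow_lt_one₀ (norm_nonneg (χ x)) h hn
    rw [h2] at this; exact absurd this (lt_irrefl 1)
  · exact h
  · have := one_lt_pow₀ h hn
    rw [h2] at this; exact absurd this (lt_irrefl 1)

lemma char_conj (χ : G →* ℂ) (x : G) : (starRingEnd ℂ) (χ x) = χ x⁻¹ := by
  have h1 : (χ x)⁻¹ = (starRingEnd ℂ) (χ x) := Complex.inv_eq_conj (char_abs χ x)
  rw [← h1, ← map_inv]

end Aux

theorem stmt19 {G H : Type} [CommGroup G] [Fintype G] [CommGroup H] [Fintype H]
    (χG : G ≃* (G →* ℂ)) (χH : H ≃* (H →* ℂ)) (f : G → H) :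
    IsPerfectNonlinear f ↔
      ∀ (α : G) (β : H), β ≠ 1 →
        ‖∑ x : G, χH β (f x) * χG α x‖ ^ 2 = (Fintype.card G : ℝ) := by
  have hGne : (Fintype.card G : ℂ) ≠ 0 := Nat.cast_ne_zero.mpr Fintype.card_ne_zero
  have hHne : (Fintype.card H : ℂ) ≠ 0 := Nat.cast_ne_zero.mpr Fintype.card_ne_zero
  -- The fundamental identity: |S|² = ∑_a χG α a · F β a.
  have key : ∀ (α : G) (β : H),
      ((‖∑ x : G, χH β (f x) * χG α x‖ ^ 2 : ℝ) : ℂ)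
        = ∑ a : G, χG α a * ∑ y : G, χH β (f (a * y) * (f y)⁻¹) := by
    intro α β
    rw [Complex.sq_norm, ← Complex.mul_conj, map_sum, Finset.sum_mul_sum, Finset.sum_comm]
    have h1 : ∀ y : G,
        ∑ x : G, (χH β (f x) * χG α x) * (starRingEnd ℂ) (χH β (f y) * χG α y)
          = ∑ a : G, χG α a * χH β (f (a * y) * (f y)⁻¹) := by
      intro y
      have h2 : ∑ a : G, (χH β (f (a * y)) * χG α (a * y)) * (starRingEnd ℂ) (χH β (f y) * χG α y)
          = ∑ x : G, (χH β (f x) * χG α x) * (starRingEnd ℂ) (χH β (f y) * χG α y) :=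
        Fintype.sum_bijective (· * y) (Group.mulRight_bijective y) _ _ (fun a => rfl)
      rw [← h2]
      refine Finset.sum_congr rfl fun a _ => ?_
      rw [map_mul (starRingEnd ℂ) (χH β (f y)) (χG α y), char_conj (χH β), char_conj (χG α)]
      have e1 : χG α (a * y) * χG α y⁻¹ = χG α a := by
        rw [← map_mul, mul_inv_cancel_right]
      have e2 : χH β (f (a * y)) * χH β ((f y)⁻¹) = χH β (f (a * y) * (f y)⁻¹) := by
        rw [← map_mul]
      calc (χH β (f (a * y)) * χG α (a * y)) * (χH β ((f y)⁻¹) * χG α y⁻¹)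
          = (χH β (f (a * y)) * χH β ((f y)⁻¹)) * (χG α (a * y) * χG α y⁻¹) := by ring
        _ = χG α a * χH β (f (a * y) * (f y)⁻¹) := by rw [e1, e2]; ring
    simp_rw [h1]
    rw [Finset.sum_comm]
    simp_rw [← Finset.mul_sum]
  constructor
  · -- forward
    intro hpn α β hβ
    have hχβ : χH β ≠ (1 : H →* ℂ) := by
      intro hcon
      exact hβ (χH.injective (hcon.trans (map_one χH).symm))
    have hF1 : ∑ y : G, χH β (f (1 * y) * (f y)⁻¹) = (Fintype.card G : ℂ) := by
      simp [Finset.card_univ]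
    have hF0 : ∀ a : G, a ≠ 1 → ∑ y : G, χH β (f (a * y) * (f y)⁻¹) = 0 := by
      intro a ha
      have hb := hpn a ha
      set g : G → H := fun y => f (a * y) * (f y)⁻¹ with hg
      have hfib : ∑ y : G, χH β (g y)
          = ∑ h' : H, (Fintype.card {y : G // g y = h'} : ℂ) * χH β h' := by
        rw [← Fintype.sum_fiberwise g (fun y => χH β (g y))]
        refine Finset.sum_congr rfl fun h' _ => ?_
        calc ∑ y : {y : G // g y = h'}, χH β (g y.1)
            = ∑ _y : {y : G // g y = h'}, χH β h' :=
              Finset.sum_congr rfl (fun y _ => by rw [y.2])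
          _ = (Fintype.card {y : G // g y = h'} : ℂ) * χH β h' := by
              rw [Finset.sum_const, Finset.card_univ, nsmul_eq_mul]
      have hmul : (Fintype.card H : ℂ) * ∑ y : G, χH β (g y) = 0 := by
        rw [hfib, Finset.mul_sum]
        have hterm : ∀ h' : H,
            (Fintype.card H : ℂ) * ((Fintype.card {y : G // g y = h'} : ℂ) * χH β h')
              = (Fintype.card G : ℂ) * χH β h' := by
          intro h'
          have hcnt := hb h'
          rw [Nat.card_eq_fintype_card] at hcnt
          rw [← mul_assoc, mul_comm ((Fintype.card H : ℂ)), ← Nat.cast_mul, hcnt]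
        simp_rw [hterm]
        rw [← Finset.mul_sum, sum_char_eq_zero (χH β) hχβ, mul_zero]
      exact (mul_eq_zero.mp hmul).resolve_left hHne
    have hfinal : ((‖∑ x : G, χH β (f x) * χG α x‖ ^ 2 : ℝ) : ℂ)
        = (Fintype.card G : ℂ) := by
      rw [key α β, Finset.sum_eq_single 1]
      · rw [hF1, map_one, one_mul]
      · intro b _ hb
        rw [hF0 b hb, mul_zero]
      · intro hmem; exact absurd (Finset.mem_univ 1) hmem
    exact_mod_cast hfinal
  · -- converse
    intro hyp
    -- Step 1: all nontrivial twisted derivative sums vanish.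
    have hF0 : ∀ (β : H), β ≠ 1 → ∀ a : G, a ≠ 1 →
        ∑ y : G, χH β (f (a * y) * (f y)⁻¹) = 0 := by
      intro β hβ
      have hall : ∀ α : G,
          ∑ b : G, χG α b * ∑ y : G, χH β (f (b * y) * (f y)⁻¹) = (Fintype.card G : ℂ) := by
        intro α
        rw [← key α β]
        exact_mod_cast congrArg Complex.ofReal (hyp α β hβ)
      set D : G → ℂ :=
        fun b => (∑ y : G, χH β (f (b * y) * (f y)⁻¹))
          - (if b = 1 then (Fintype.card G : ℂ) else 0) with hD
      have hzero : ∀ α : G, ∑ b : G, χG α b * D b = 0 := by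
        intro α
        simp_rw [hD, mul_sub]
        rw [Finset.sum_sub_distrib, hall α]
        have hdelta : ∑ b : G, χG α b * (if b = 1 then (Fintype.card G : ℂ) else 0)
            = (Fintype.card G : ℂ) := by
          rw [Finset.sum_eq_single 1]
          · rw [if_pos rfl, map_one, one_mul]
          · intro b _ hb; rw [if_neg hb, mul_zero]
          · intro hmem; exact absurd (Finset.mem_univ 1) hmem
        rw [hdelta, sub_self]
      intro a ha
      have hswap : ∑ α : G, χG α a⁻¹ * ∑ b : G, χG α b * D b
          = (Fintype.card G : ℂ) * D a := by
        simp_rw [Finset.mul_sum]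
        rw [Finset.sum_comm]
        have hin : ∀ b : G, ∑ α : G, χG α a⁻¹ * (χG α b * D b)
            = (if a⁻¹ * b = 1 then (Fintype.card G : ℂ) else 0) * D b := by
          intro b
          simp_rw [← mul_assoc, ← map_mul]
          rw [← Finset.sum_mul, sum_eval_ite χG (a⁻¹ * b)]
        simp_rw [hin]
        rw [Finset.sum_eq_single a]
        · rw [if_pos (inv_mul_cancel a)]
        · intro b _ hb
          rw [if_neg fun hcon => hb (inv_mul_eq_one.mp hcon).symm, zero_mul]
        · intro hmem; exact absurd (Finset.mem_univ a) hmem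
      have hDa : (Fintype.card G : ℂ) * D a = 0 := by
        rw [← hswap]
        simp only [hzero, mul_zero, Finset.sum_const_zero]
      have hDa0 : D a = 0 := (mul_eq_zero.mp hDa).resolve_left hGne
      have := hDa0
      rw [hD] at this
      simp only [if_neg ha, sub_zero] at this
      exact this
    -- Step 2: counting fibers.
    intro a ha h'
    set g : G → H := fun y => f (a * y) * (f y)⁻¹ with hg
    have hC : ((univ.filter (fun y : G => g y = h')).card : ℂ) * (Fintype.card H : ℂ)
        = (Fintype.card G : ℂ) := by
      have lhs : ∑ y : G, ∑ β : H, χH β (g y * h'⁻¹)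
          = ((univ.filter (fun y : G => g y = h')).card : ℂ) * (Fintype.card H : ℂ) := by
        have h1 : ∀ y : G, ∑ β : H, χH β (g y * h'⁻¹)
            = if g y = h' then (Fintype.card H : ℂ) else 0 := by
          intro y
          rw [sum_eval_ite χH (g y * h'⁻¹)]
          congr 1
          exact propext mul_inv_eq_one
        simp_rw [h1]
        rw [Finset.sum_ite, Finset.sum_const, Finset.sum_const_zero, add_zero, nsmul_eq_mul]
      have rhs : ∑ β : H, ∑ y : G, χH β (g y * h'⁻¹) = (Fintype.card G : ℂ) := by
        have hterm : ∀ β : H, ∑ y : G, χH β (g y * h'⁻¹)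
            = (∑ y : G, χH β (g y)) * χH β h'⁻¹ := by
          intro β
          rw [Finset.sum_mul]
          exact Finset.sum_congr rfl fun y _ => map_mul _ _ _
        simp_rw [hterm]
        rw [Finset.sum_eq_single 1]
        · rw [map_one χH]
          simp [Finset.card_univ]
        · intro β _ hβ1
          have h0 : ∑ y : G, χH β (g y) = 0 := hF0 β hβ1 a ha
          rw [h0, zero_mul]
        · intro hmem; exact absurd (Finset.mem_univ 1) hmem
      rw [← lhs, Finset.sum_comm, rhs]
    have hNat : (univ.filter (fun y : G => g y = h')).card * Fintype.card H
        = Fintype.card G := by exact_mod_cast hC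
    rw [Nat.card_eq_fintype_card, Fintype.card_subtype]
    exact hNat
end
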